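/- For all t > 1 and β > 1, one has ψ''(t)·ψ'(βt) − β·ψ'(t)·ψ''(βt) > 0, where ψ(t) = (1/2)(2t² + 1/t² − 5) + e^{1/t−1}. -/

import Mathlib

/-!
With `s = β t`, multiplying the claimed expression by `t⁴ s³ > 0` clears all denominators of
`ψ'` and `ψ''`, leaving a polynomial in `t`, `s`, `E = e^{1/t-1}` and `F = e^{1/s-1}`. For
`1 < t < s` one has `0 < F ≤ E ≤ 1`, and the polynomial splits as
`8(s⁴ - t⁴) + A (E - F) + (s - t) E (1 - F) + (s - t) C E` with `A, C ≥ 0` polynomials in `t, s`.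
-/

noncomputable def psi (t : ℝ) : ℝ :=
  (1/2) * (2*t^2 + 1/t^2 - 5) + Real.exp (1/t - 1)

open Real Filter Topology

lemma hasDerivAt_exp_one_div_sub_one {t : ℝ} (ht : t ≠ 0) :
    HasDerivAt (fun x => exp (1/x - 1)) (-exp (1/t - 1) / t^2) t := by
  convert ((hasDerivAt_inv ht).sub_const 1).exp using 1 <;> simp [div_eq_mul_inv]

lemma hasDerivAt_psi {t : ℝ} (ht : t ≠ 0) :
    HasDerivAt psi (2*t - 1/t^3 - exp (1/t - 1)/t^2) t := by
  have h := ((((hasDerivAt_pow 2 t).const_mul 2).fun_add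
    ((hasDerivAt_pow 2 t).fun_inv (pow_ne_zero 2 ht))).sub_const 5).const_mul (1/2 : ℝ)
  refine (h.fun_add (hasDerivAt_exp_one_div_sub_one ht)).congr_deriv ?_ |>.congr_of_eventuallyEq ?_
  · norm_num; field_simp; ring
  · filter_upwards with x; simp [psi]

lemma hasDerivAt_deriv_psi {t : ℝ} (ht : t ≠ 0) :
    HasDerivAt (fun x => 2*x - 1/x^3 - exp (1/x - 1)/x^2)
      (2 + 3/t^4 + (2/t^3 + 1/t^4) * exp (1/t - 1)) t := by
  have h := (((hasDerivAt_id t).const_mul 2).fun_sub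
    ((hasDerivAt_pow 3 t).fun_inv (pow_ne_zero 3 ht))).fun_sub
    ((hasDerivAt_exp_one_div_sub_one ht).fun_div (hasDerivAt_pow 2 t) (pow_ne_zero 2 ht))
  refine h.congr_deriv ?_ |>.congr_of_eventuallyEq ?_
  · norm_num; field_simp; ring
  · filter_upwards with x; simp

lemma deriv_psi {t : ℝ} (ht : t ≠ 0) : deriv psi t = 2*t - 1/t^3 - exp (1/t - 1)/t^2 :=
  (hasDerivAt_psi ht).deriv

lemma deriv_deriv_psi {t : ℝ} (ht : t ≠ 0) :
    deriv (deriv psi) t = 2 + 3/t^4 + (2/t^3 + 1/t^4) * exp (1/t - 1) := by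
  have h : deriv psi =ᶠ[𝓝 t] fun x => 2*x - 1/x^3 - exp (1/x - 1)/x^2 :=
    (eventually_ne_nhds ht).mono fun _ hx => deriv_psi hx
  rw [h.deriv_eq]
  exact (hasDerivAt_deriv_psi ht).deriv

def crossNumerator (t s E F : ℝ) : ℝ :=
  8*(s^4 - t^4) + (6*t*s^4 + 2*s^4 + t - 1)*E - (6*s*t^4 + 2*t^4 + s - 1)*F + (t - s)*E*F

lemma crossNumerator_pos {t s E F : ℝ} (ht : 1 ≤ t) (hts : t < s) (hF : 0 ≤ F) (hFE : F ≤ E)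
    (hE : E ≤ 1) : 0 < crossNumerator t s E F := by
  have hs : 1 < s := ht.trans_lt hts
  have hA : 0 ≤ 6*s*t^4 + 2*t^4 + s - 1 := by nlinarith [one_le_pow₀ (n := 4) ht]
  have hC : 0 ≤ 6*t*s*(s^2 + s*t + t^2) + 2*(s + t)*(s^2 + t^2) - 2 := by
    nlinarith [one_le_mul_of_one_le_of_one_le ht hs.le]
  have h4 : t^4 < s^4 := pow_lt_pow_left₀ hts (by linarith) four_ne_zero
  have hsplit : crossNumerator t s E F = 8*(s^4 - t^4) + (6*s*t^4 + 2*t^4 + s - 1)*(E - F)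
      + (s - t)*E*(1 - F) + (s - t)*(6*t*s*(s^2 + s*t + t^2) + 2*(s + t)*(s^2 + t^2) - 2)*E := by
    unfold crossNumerator; ring
  have hst : 0 ≤ s - t := by linarith
  have hE0 : 0 ≤ E := hF.trans hFE
  have hAEF := mul_nonneg hA (sub_nonneg.2 hFE)
  have hEF := mul_nonneg (mul_nonneg hst hE0) (sub_nonneg.2 (hFE.trans hE))
  have hCE := mul_nonneg (mul_nonneg hst hC) hE0
  rw [hsplit]
  linarith

lemma psi_cross_eq {t β : ℝ} (ht : t ≠ 0) (hβ : β ≠ 0) :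
    deriv (deriv psi) t * deriv psi (β * t) - β * deriv psi t * deriv (deriv psi) (β * t)
      = crossNumerator t (β * t) (exp (1/t - 1)) (exp (1/(β * t) - 1)) / (t^4 * (β * t)^3) := by
  have hs : β * t ≠ 0 := mul_ne_zero hβ ht
  rw [deriv_psi ht, deriv_psi hs, deriv_deriv_psi ht, deriv_deriv_psi hs, crossNumerator]
  field_simp
  ring

theorem stmt_8 : ∀ t β : ℝ, 1 < t → 1 < β →
    deriv (deriv psi) t * deriv psi (β * t)
      - β * deriv psi t * deriv (deriv psi) (β * t) > 0 := by
  intro t β ht hβ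
  have ht0 : 0 < t := one_pos.trans ht
  have hts : t < β * t := lt_mul_left ht0 hβ
  rw [psi_cross_eq ht0.ne' (one_pos.trans hβ).ne']
  have hE : exp (1/t - 1) ≤ 1 := by
    rw [exp_le_one_iff, sub_nonpos, div_le_one ht0]; exact ht.le
  have hFE : exp (1/(β * t) - 1) ≤ exp (1/t - 1) := by gcongr
  exact div_pos (crossNumerator_pos ht.le hts (exp_pos _).le hFE hE) (by positivity)
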